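/- For a δ-Jordan Lie supertriple system T, the supercommutator of a k-derivation and an element of the l-centroid lies in the (k+l)-centroid: if D₁ ∈ Der_k(T) and D₂ ∈ C_l(T), then [D₁,D₂] = D₁D₂ - (-1)^{|D₁||D₂|}D₂D₁ ∈ C^{k+l}(T). In particular [Der(T), C(T)] ⊆ C(T). -/

import Mathlib

/-- The sign `(-1)^{ij}` for degrees `i, j ∈ ℤ/2`, valued in the field `k`. -/
def sgn (k : Type) [Field k] (i j : ZMod 2) : k := (-1 : k) ^ (i.val * j.val)

/-- A `δ`-Jordan Lie supertriple system: a `ℤ/2`-graded vector space `M` over `k`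
with a trilinear product satisfying the four graded axioms. -/
structure DJLSTS (k : Type) [Field k] (M : Type) [AddCommGroup M] [Module k M] (δ : k) where
  grade : ZMod 2 → Submodule k M
  direct : DirectSum.IsInternal grade
  br : M →ₗ[k] M →ₗ[k] M →ₗ[k] M
  delta_pm : δ = 1 ∨ δ = -1
  grade_br : ∀ {i j l : ZMod 2} {a b c : M},
      a ∈ grade i → b ∈ grade j → c ∈ grade l → br a b c ∈ grade (i + j + l)
  skew : ∀ {i j : ZMod 2} {a b : M}, a ∈ grade i → b ∈ grade j → ∀ c : M,
      br b a c = -((δ * sgn k i j) • br a b c)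
  cyclic : ∀ {i j l : ZMod 2} {a b c : M},
      a ∈ grade i → b ∈ grade j → c ∈ grade l →
      sgn k i l • br a b c + sgn k j i • br b c a + sgn k l j • br c a b = 0
  fund : ∀ {i j l m : ZMod 2} {a b c d : M},
      a ∈ grade i → b ∈ grade j → c ∈ grade l → d ∈ grade m → ∀ e : M,
      br a b (br c d e) = br (br a b c) d e + sgn k l (i + j) • br c (br a b d) e
        + (δ * sgn k (i + j) (l + m)) • br c d (br a b e)

/-- A `δ`-Jordan Lie superalgebra. -/
structure DJLSA (k : Type) [Field k] (M : Type) [AddCommGroup M] [Module k M] (δ : k) where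
  grade : ZMod 2 → Submodule k M
  direct : DirectSum.IsInternal grade
  br2 : M →ₗ[k] M →ₗ[k] M
  delta_pm : δ = 1 ∨ δ = -1
  grade_br2 : ∀ {i j : ZMod 2} {a b : M},
      a ∈ grade i → b ∈ grade j → br2 a b ∈ grade (i + j)
  skew2 : ∀ {i j : ZMod 2} {a b : M}, a ∈ grade i → b ∈ grade j →
      br2 b a = -((δ * sgn k i j) • br2 a b)
  jacobi : ∀ {i j l : ZMod 2} {a b c : M},
      a ∈ grade i → b ∈ grade j → c ∈ grade l →
      (δ * sgn k i l) • br2 (br2 a b) c + (δ * sgn k j i) • br2 (br2 b c) a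
        + (δ * sgn k l j) • br2 (br2 c a) b = 0

/-- An (ungraded) `δ`-Jordan Lie triple system. -/
structure DJLTS (k : Type) [Field k] (W : Type) [AddCommGroup W] [Module k W] (δ : k) where
  br : W →ₗ[k] W →ₗ[k] W →ₗ[k] W
  delta_pm : δ = 1 ∨ δ = -1
  skew : ∀ a b c : W, br b a c = -(δ • br a b c)
  cyclic : ∀ a b c : W, br a b c + br b c a + br c a b = 0
  fund : ∀ a b c d e : W,
      br a b (br c d e) = br (br a b c) d e + br c (br a b d) e + δ • br c d (br a b e)

variable {k : Type} [Field k] {M : Type} [AddCommGroup M] [Module k M] {δ : k}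
variable {W : Type} [AddCommGroup W] [Module k W]

/-- `D` is homogeneous of degree `s` with respect to the grading of `S`. -/
def IsHomog (S : DJLSTS k M δ) (s : ZMod 2) (D : M →ₗ[k] M) : Prop :=
  ∀ (i : ZMod 2) (a : M), a ∈ S.grade i → D a ∈ S.grade (s + i)

/-- Supercommutator `[D₁,D₂] = D₁D₂ - (-1)^{|D₁||D₂|} D₂D₁` of homogeneous operators
of degrees `s₁`, `s₂`. -/
def scomm (s₁ s₂ : ZMod 2) (D₁ D₂ : M →ₗ[k] M) : M →ₗ[k] M :=
  D₁ ∘ₗ D₂ - sgn k s₁ s₂ • (D₂ ∘ₗ D₁)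

/-- Homogeneous `n`-derivation of degree `s`. -/
def IsDer (S : DJLSTS k M δ) (n : ℕ) (s : ZMod 2) (D : M →ₗ[k] M) : Prop :=
  IsHomog S s D ∧ ∀ {i j : ZMod 2} {a b : M}, a ∈ S.grade i → b ∈ S.grade j → ∀ c : M,
    δ ^ n • S.br (D a) b c + (δ ^ n * sgn k s i) • S.br a (D b) c
      + (δ ^ n * sgn k s (i + j)) • S.br a b (D c) = D (S.br a b c)

/-- Homogeneous generalized `n`-derivation of degree `s`, with associated maps `D' D'' D'''`. -/
def IsGenDer (S : DJLSTS k M δ) (n : ℕ) (s : ZMod 2) (D D' D'' D''' : M →ₗ[k] M) : Prop :=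
  IsHomog S s D ∧ IsHomog S s D' ∧ IsHomog S s D'' ∧ IsHomog S s D''' ∧
  ∀ {i j : ZMod 2} {a b : M}, a ∈ S.grade i → b ∈ S.grade j → ∀ c : M,
    δ ^ n • S.br (D a) b c + (δ ^ n * sgn k s i) • S.br a (D' b) c
      + (δ ^ n * sgn k s (i + j)) • S.br a b (D'' c) = D''' (S.br a b c)

/-- Membership in the `n`-centroid, for `D` homogeneous of degree `s`. -/
def IsCentroid (S : DJLSTS k M δ) (n : ℕ) (s : ZMod 2) (D : M →ₗ[k] M) : Prop :=
  IsHomog S s D ∧ ∀ {i j : ZMod 2} {a b : M}, a ∈ S.grade i → b ∈ S.grade j → ∀ c : M,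
    δ ^ n • S.br (D a) b c = D (S.br a b c) ∧
    (δ ^ n * sgn k s i) • S.br a (D b) c = D (S.br a b c) ∧
    (δ ^ n * sgn k s (i + j)) • S.br a b (D c) = D (S.br a b c)

/-- Membership in the quasicentroid, for `D` homogeneous of degree `s`. -/
def IsQC (S : DJLSTS k M δ) (s : ZMod 2) (D : M →ₗ[k] M) : Prop :=
  IsHomog S s D ∧ ∀ a b c : M, D (S.br a b c) = S.br (D a) b c

/-- Central derivation. -/
def IsZDer (S : DJLSTS k M δ) (D : M →ₗ[k] M) : Prop :=
  ∀ a b c : M, D (S.br a b c) = 0 ∧ S.br (D a) b c = 0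

/-- The operator `D(a,b) = (-1)^{|a||b|}θ(b,a) - δθ(a,b)` attached to a bilinear map `θ`,
where `i, j` are the degrees of `a, b`. -/
def Dop (δ : k) (θ : M →ₗ[k] M →ₗ[k] W →ₗ[k] W) (i j : ZMod 2) (a b : M) : W →ₗ[k] W :=
  sgn k i j • θ b a - δ • θ a b

/-- A representation of a `δ`-Jordan Lie supertriple system `S` on a
`ℤ/2`-graded vector space `V`. -/
structure DJRep (S : DJLSTS k M δ) (V : Type) [AddCommGroup V] [Module k V] where
  Vgrade : ZMod 2 → Submodule k V
  Vdirect : DirectSum.IsInternal Vgrade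
  θ : M →ₗ[k] M →ₗ[k] V →ₗ[k] V
  θ_grade : ∀ {i j n : ZMod 2} {a b : M} {v : V},
      a ∈ S.grade i → b ∈ S.grade j → v ∈ Vgrade n → θ a b v ∈ Vgrade (i + j + n)
  rep1 : ∀ {i j l m : ZMod 2} {a b c d : M},
      a ∈ S.grade i → b ∈ S.grade j → c ∈ S.grade l → d ∈ S.grade m → ∀ v : V,
      sgn k (i + j) (l + m) • θ c d (θ a b v)
        - (δ * sgn k i j * sgn k m (l + i)) • θ b d (θ a c v)
        - θ a (S.br b c d) v + sgn k i (j + l) • Dop δ θ j l b c (θ a d v) = 0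
  rep2 : ∀ {i j l m : ZMod 2} {a b c d : M},
      a ∈ S.grade i → b ∈ S.grade j → c ∈ S.grade l → d ∈ S.grade m → ∀ v : V,
      (δ * sgn k (i + j) (l + m)) • θ c d (Dop δ θ i j a b v)
        - δ • Dop δ θ i j a b (θ c d v)
        + θ (S.br a b c) d v + (δ * sgn k l (i + j)) • θ c (S.br a b d) v = 0
  rep3 : ∀ {i j l m : ZMod 2} {a b c d : M},
      a ∈ S.grade i → b ∈ S.grade j → c ∈ S.grade l → d ∈ S.grade m → ∀ v : V,
      Dop δ θ (i + j + l) m (S.br a b c) d v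
        + sgn k l (i + j) • Dop δ θ l (i + j + m) c (S.br a b d) v
        - δ • Dop δ θ i j a b (Dop δ θ l m c d v)
        + sgn k (i + j) (l + m) • Dop δ θ l m c d (Dop δ θ i j a b v) = 0

/-- The coboundary `d¹` of a `1`-cochain `f` of degree `s`, as a function of the degrees
`i j l` and the (homogeneous) arguments. -/
def d1 (S : DJLSTS k M δ) (R : DJRep S W) (s : ZMod 2) (f : M →ₗ[k] W) :
    ZMod 2 → ZMod 2 → ZMod 2 → M → M → M → W := fun i j l x₁ x₂ x₃ =>
  sgn k (s + i) (j + l) • R.θ x₂ x₃ (f x₁) - f (S.br x₁ x₂ x₃)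
    + (δ * sgn k s (i + j)) • Dop δ R.θ i j x₁ x₂ (f x₃)
    - (δ * sgn k j l * sgn k s (i + l)) • R.θ x₁ x₃ (f x₂)

/-- The coboundary `d³` of a `3`-cochain `g` of degree `s` (given together with the
degrees of its arguments), as a function of the degrees and the (homogeneous) arguments. -/
def d3 (S : DJLSTS k M δ) (R : DJRep S W) (s : ZMod 2)
    (g : ZMod 2 → ZMod 2 → ZMod 2 → M → M → M → W) :
    ZMod 2 → ZMod 2 → ZMod 2 → ZMod 2 → ZMod 2 → M → M → M → M → M → W :=
  fun i₁ i₂ i₃ i₄ i₅ x₁ x₂ x₃ x₄ x₅ =>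
    sgn k (s + i₁ + i₂ + i₃) (i₄ + i₅) • R.θ x₄ x₅ (g i₁ i₂ i₃ x₁ x₂ x₃)
    - (δ * sgn k (s + i₁ + i₂) (i₃ + i₅) * sgn k i₄ i₅) • R.θ x₃ x₅ (g i₁ i₂ i₄ x₁ x₂ x₄)
    - (δ * sgn k s (i₁ + i₂)) • Dop δ R.θ i₁ i₂ x₁ x₂ (g i₃ i₄ i₅ x₃ x₄ x₅)
    + sgn k (s + i₁ + i₂) (i₃ + i₄) • Dop δ R.θ i₃ i₄ x₃ x₄ (g i₁ i₂ i₅ x₁ x₂ x₅)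
    + g (i₁ + i₂ + i₃) i₄ i₅ (S.br x₁ x₂ x₃) x₄ x₅
    - g i₁ i₂ (i₃ + i₄ + i₅) x₁ x₂ (S.br x₃ x₄ x₅)
    + sgn k i₃ (i₁ + i₂) • g i₃ (i₁ + i₂ + i₄) i₅ x₃ (S.br x₁ x₂ x₄) x₅
    + (δ * sgn k (i₁ + i₂) (i₃ + i₄)) • g i₃ i₄ (i₁ + i₂ + i₅) x₃ x₄ (S.br x₁ x₂ x₅)

/-- An even trilinear map `ψ` is a `3`-cocycle of `S` (with respect to the adjoint
representation): `d³ψ = 0`, written out explicitly. -/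
def IsCocycle3 (S : DJLSTS k M δ) (ψ : M →ₗ[k] M →ₗ[k] M →ₗ[k] M) : Prop :=
  ∀ {i₁ i₂ i₃ i₄ : ZMod 2} {x₁ x₂ x₃ x₄ : M},
    x₁ ∈ S.grade i₁ → x₂ ∈ S.grade i₂ → x₃ ∈ S.grade i₃ → x₄ ∈ S.grade i₄ → ∀ x₅ : M,
    S.br x₁ x₂ (ψ x₃ x₄ x₅) + ψ x₁ x₂ (S.br x₃ x₄ x₅)
      = S.br (ψ x₁ x₂ x₃) x₄ x₅ + ψ (S.br x₁ x₂ x₃) x₄ x₅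
        + sgn k i₃ (i₁ + i₂) • (S.br x₃ (ψ x₁ x₂ x₄) x₅ + ψ x₃ (S.br x₁ x₂ x₄) x₅)
        + (δ * sgn k (i₁ + i₂) (i₃ + i₄))
            • (S.br x₃ x₄ (ψ x₁ x₂ x₅) + ψ x₃ x₄ (S.br x₁ x₂ x₅))

/-- A 1-parameter formal deformation `f_t = ∑ fᵢ tⁱ` of `S`, recorded by its sequence of
coefficients, satisfying equations (4.5)–(4.8). -/
def IsDeformation (S : DJLSTS k M δ) (F : ℕ → (M →ₗ[k] M →ₗ[k] M →ₗ[k] M)) : Prop :=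
  F 0 = S.br ∧
  (∀ (p : ℕ) {i j l : ZMod 2} {a b c : M},
      a ∈ S.grade i → b ∈ S.grade j → c ∈ S.grade l → F p a b c ∈ S.grade (i + j + l)) ∧
  (∀ (p : ℕ) {i j : ZMod 2} {a b : M}, a ∈ S.grade i → b ∈ S.grade j → ∀ c : M,
      F p b a c = -((δ * sgn k i j) • F p a b c)) ∧
  (∀ (p : ℕ) {i j l : ZMod 2} {a b c : M},
      a ∈ S.grade i → b ∈ S.grade j → c ∈ S.grade l →
      sgn k i l • F p a b c + sgn k j i • F p b c a + sgn k l j • F p c a b = 0) ∧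
  (∀ (n : ℕ) {i j l m : ZMod 2} {a b c d : M},
      a ∈ S.grade i → b ∈ S.grade j → c ∈ S.grade l → d ∈ S.grade m → ∀ e : M,
      ∑ p ∈ Finset.range (n + 1), F p a b (F (n - p) c d e)
        = ∑ p ∈ Finset.range (n + 1),
            (F p (F (n - p) a b c) d e
              + sgn k l (i + j) • F p c (F (n - p) a b d) e
              + (δ * sgn k (i + j) (l + m)) • F p c d (F (n - p) a b e)))

/-- Equivalence of two formal deformations via a formal isomorphism
`φ_t = ∑ φᵢ tⁱ` with `φ₀ = id`: `φ_t ∘ f_t = f'_t ∘ (φ_t × φ_t × φ_t)` coefficientwise. -/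
def DefEquiv (S : DJLSTS k M δ) (F F' : ℕ → (M →ₗ[k] M →ₗ[k] M →ₗ[k] M))
    (φ : ℕ → (M →ₗ[k] M)) : Prop :=
  φ 0 = LinearMap.id ∧
  ∀ (n : ℕ) (x₁ x₂ x₃ : M),
    ∑ p ∈ Finset.range (n + 1), φ p (F (n - p) x₁ x₂ x₃)
      = ∑ q ∈ Finset.Nat.antidiagonalTuple 4 n,
          F' (q 0) (φ (q 1) x₁) (φ (q 2) x₂) (φ (q 3) x₃)

/-- Nijenhuis operator on a `δ`-Jordan Lie supertriple system. -/
def IsNijenhuis (S : DJLSTS k M δ) (N : M →ₗ[k] M) : Prop :=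
  (∀ x₁ x₂ x₃ : M, S.br (N x₁) (N x₂) (N x₃) = 0) ∧
  (∀ x₁ x₂ x₃ : M,
    N (N (S.br x₁ x₂ x₃))
      = N (S.br (N x₁) x₂ x₃) + N (S.br x₁ (N x₂) x₃) + N (S.br x₁ x₂ (N x₃))
        - S.br (N x₁) (N x₂) x₃ - S.br x₁ (N x₂) (N x₃) - S.br (N x₁) x₂ (N x₃))

/-!
Expand `[D₁,D₂][a,b,c]` using the Leibniz rule for `D₁` and the centroid rule for `D₂`.
The terms in which `D₁` and `D₂` act on different arguments cancel in pairs, because the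
Koszul signs satisfy `σ(s₁,s₂) σ(s₂,s₁) = 1`. The remaining terms are the centroid rule
for `[D₁,D₂]` in the argument that `D₂` was moved into.
-/
theorem sgn_add_right (i j l : ZMod 2) : sgn k i (j + l) = sgn k i j * sgn k i l := by
  rw [sgn, sgn, sgn, ← pow_add, ← mul_add, ZMod.val_add, neg_one_pow_eq_pow_mod_two,
    Nat.mul_mod, Nat.mod_mod, ← Nat.mul_mod, ← neg_one_pow_eq_pow_mod_two]

theorem sgn_add_left (i j l : ZMod 2) : sgn k (i + j) l = sgn k i l * sgn k j l := by
  rw [sgn, sgn, sgn, ← pow_add, ← add_mul, ZMod.val_add, neg_one_pow_eq_pow_mod_two,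
    Nat.mul_mod, Nat.mod_mod, ← Nat.mul_mod, ← neg_one_pow_eq_pow_mod_two]

theorem sgn_mul_sgn_comm (i j : ZMod 2) : sgn k i j * sgn k j i = 1 := by
  rw [sgn, sgn, mul_comm j.val, ← pow_add, ← two_mul, pow_mul, neg_one_sq, one_pow]

theorem IsHomog.scomm {S : DJLSTS k M δ} {s₁ s₂ : ZMod 2} {D₁ D₂ : M →ₗ[k] M}
    (h₁ : IsHomog S s₁ D₁) (h₂ : IsHomog S s₂ D₂) :
    IsHomog S (s₁ + s₂) (scomm s₁ s₂ D₁ D₂) := by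
  intro i a ha
  have h₁₂ : D₁ (D₂ a) ∈ S.grade (s₁ + s₂ + i) := add_assoc s₁ s₂ i ▸ h₁ _ _ (h₂ i a ha)
  have h₂₁ : D₂ (D₁ a) ∈ S.grade (s₁ + s₂ + i) := by
    rw [add_comm s₁ s₂, add_assoc]; exact h₂ _ _ (h₁ i a ha)
  exact Submodule.sub_mem _ h₁₂ (Submodule.smul_mem _ _ h₂₁)

namespace IsDer

variable {S : DJLSTS k M δ} {n₁ n₂ : ℕ} {s₁ s₂ i j : ZMod 2} {D₁ D₂ : M →ₗ[k] M} {a b : M}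

theorem scomm_br_left (h₁ : IsDer S n₁ s₁ D₁) (h₂ : IsCentroid S n₂ s₂ D₂)
    (ha : a ∈ S.grade i) (hb : b ∈ S.grade j) (c : M) :
    δ ^ (n₁ + n₂) • S.br (scomm s₁ s₂ D₁ D₂ a) b c = scomm s₁ s₂ D₁ D₂ (S.br a b c) := by
  have hD₁a := h₁.1 i a ha
  have hD₁b := h₁.1 j b hb
  simp only [scomm, LinearMap.sub_apply, LinearMap.smul_apply, LinearMap.comp_apply]
  rw [← (h₂.2 ha hb c).1, map_smul, ← h₁.2 (h₂.1 i a ha) hb c, ← h₁.2 ha hb c]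
  simp only [map_add, map_smul]
  rw [← (h₂.2 hD₁a hb c).1, ← (h₂.2 ha hD₁b c).1, ← (h₂.2 ha hb (D₁ c)).1]
  simp only [map_sub, map_smul, LinearMap.sub_apply, LinearMap.smul_apply, sgn_add_right]
  module

theorem scomm_br_mid (h₁ : IsDer S n₁ s₁ D₁) (h₂ : IsCentroid S n₂ s₂ D₂)
    (ha : a ∈ S.grade i) (hb : b ∈ S.grade j) (c : M) :
    (δ ^ (n₁ + n₂) * sgn k (s₁ + s₂) i) • S.br a (scomm s₁ s₂ D₁ D₂ b) c
      = scomm s₁ s₂ D₁ D₂ (S.br a b c) := by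
  have hD₁a := h₁.1 i a ha
  have hD₁b := h₁.1 j b hb
  simp only [scomm, LinearMap.sub_apply, LinearMap.smul_apply, LinearMap.comp_apply]
  rw [← (h₂.2 ha hb c).2.1, map_smul, ← h₁.2 ha (h₂.1 j b hb) c, ← h₁.2 ha hb c]
  simp only [map_add, map_smul]
  rw [← (h₂.2 hD₁a hb c).2.1, ← (h₂.2 ha hD₁b c).2.1, ← (h₂.2 ha hb (D₁ c)).2.1]
  simp only [map_sub, map_smul, LinearMap.sub_apply, LinearMap.smul_apply, sgn_add_right,
    sgn_add_left]
  linear_combination (norm := module)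
    (δ ^ n₂ * δ ^ n₁ * sgn k s₂ i * sgn_mul_sgn_comm (k := k) s₁ s₂) • S.br (D₁ a) (D₂ b) c

theorem scomm_br_right (h₁ : IsDer S n₁ s₁ D₁) (h₂ : IsCentroid S n₂ s₂ D₂)
    (ha : a ∈ S.grade i) (hb : b ∈ S.grade j) (c : M) :
    (δ ^ (n₁ + n₂) * sgn k (s₁ + s₂) (i + j)) • S.br a b (scomm s₁ s₂ D₁ D₂ c)
      = scomm s₁ s₂ D₁ D₂ (S.br a b c) := by
  have hD₁a := h₁.1 i a ha
  have hD₁b := h₁.1 j b hb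
  simp only [scomm, LinearMap.sub_apply, LinearMap.smul_apply, LinearMap.comp_apply]
  rw [← (h₂.2 ha hb c).2.2, map_smul, ← h₁.2 ha hb (D₂ c), ← h₁.2 ha hb c]
  simp only [map_add, map_smul]
  rw [← (h₂.2 hD₁a hb c).2.2, ← (h₂.2 ha hD₁b c).2.2, ← (h₂.2 ha hb (D₁ c)).2.2]
  simp only [map_sub, map_smul, sgn_add_right, sgn_add_left]
  linear_combination (norm := module)
    (δ ^ n₂ * δ ^ n₁ * sgn k s₂ i * sgn k s₂ j * sgn_mul_sgn_comm (k := k) s₁ s₂) •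
      (S.br (D₁ a) b (D₂ c) + sgn k s₁ i • S.br a (D₁ b) (D₂ c))

end IsDer

/-- `[Der_{n₁}(T), C_{n₂}(T)] ⊆ C^{n₁+n₂}(T)`. -/
theorem stmt5 (S : DJLSTS k M δ) {n₁ n₂ : ℕ} {s₁ s₂ : ZMod 2} {D₁ D₂ : M →ₗ[k] M}
    (h₁ : IsDer S n₁ s₁ D₁) (h₂ : IsCentroid S n₂ s₂ D₂) :
    IsCentroid S (n₁ + n₂) (s₁ + s₂) (scomm s₁ s₂ D₁ D₂) :=
  ⟨h₁.1.scomm h₂.1, fun ha hb c =>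
    ⟨h₁.scomm_br_left h₂ ha hb c, h₁.scomm_br_mid h₂ ha hb c, h₁.scomm_br_right h₂ ha hb c⟩⟩
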